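/- arXiv:2305.09570 — 3 statements merged into one kernel-verified Lean document; each statement's English description precedes it below -/
import Mathlib

section
/- Let (X,d) be a metric space with partial order ≼ and let S,T : X → B(X) satisfy the generalized (ψ,φ)-weak contractive condition, where ψ ∈ Υ and φ : [0,∞) → [0,∞) has property (P). Let {x_n} be a sequence in X with x_{2n+1} ∈ Sx_{2n} =: A_{2n}, x_{2n+2} ∈ Tx_{2n+1} =: A_{2n+1}, and x_{n+1} ≼ x_n for all n ≥ 0. Then δ(A_n, A_{n+1}) → 0 as n → ∞, and consequently d(x_n, x_{n+1}) → 0 as n → ∞. -/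
open Filter Topology Bornology

/-- δ(A,B) = sup{d(a,b) : a ∈ A, b ∈ B}. -/
noncomputable def setDelta {X : Type*} [MetricSpace X] (A B : Set X) : ℝ :=
  sSup {r : ℝ | ∃ a ∈ A, ∃ b ∈ B, r = dist a b}

/-- D(A,B) = inf{d(a,b) : a ∈ A, b ∈ B}. -/
noncomputable def setInfDist {X : Type*} [MetricSpace X] (A B : Set X) : ℝ :=
  sInf {r : ℝ | ∃ a ∈ A, ∃ b ∈ B, r = dist a b}

/-- M(x,y) = max{d(x,y), δ(x,Sx), δ(y,Ty), (D(x,Ty)+D(y,Sx))/2}. -/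
noncomputable def genM {X : Type*} [MetricSpace X] (S T : X → Set X) (x y : X) : ℝ :=
  max (max (dist x y) (setDelta {x} (S x)))
      (max (setDelta {y} (T y))
        ((setInfDist {x} (T y) + setInfDist {y} (S x)) / 2))

/-- ψ ∈ Υ : ψ : [0,∞) → [0,∞) is nondecreasing and for any two nonnegative sequences with
the same limit, the sequences of ψ-values have the same limit. -/
def PsiClass (ψ : ℝ → ℝ) : Prop :=
  (∀ t, 0 ≤ t → 0 ≤ ψ t) ∧
  (∀ s t, 0 ≤ s → s ≤ t → ψ s ≤ ψ t) ∧
  (∀ (a b : ℕ → ℝ) (L la lb : ℝ), (∀ n, 0 ≤ a n) → (∀ n, 0 ≤ b n) →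
    Filter.Tendsto a Filter.atTop (nhds L) → Filter.Tendsto b Filter.atTop (nhds L) →
    Filter.Tendsto (fun n => ψ (a n)) Filter.atTop (nhds la) →
    Filter.Tendsto (fun n => ψ (b n)) Filter.atTop (nhds lb) → la = lb)

/-- Property (P) for φ : [0,∞) → [0,∞): if φ(t_n) → 0 then t_n → 0. -/
def PropP (φ : ℝ → ℝ) : Prop :=
  (∀ t, 0 ≤ t → 0 ≤ φ t) ∧
  (∀ t : ℕ → ℝ, (∀ n, 0 ≤ t n) →
    Filter.Tendsto (fun n => φ (t n)) Filter.atTop (nhds 0) →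
    Filter.Tendsto t Filter.atTop (nhds 0))

section Aux

variable {X : Type*} [MetricSpace X]

lemma distSet_bddAbove {A B : Set X} (hA : IsBounded A) (hB : IsBounded B) :
    BddAbove {r : ℝ | ∃ a ∈ A, ∃ b ∈ B, r = dist a b} := by
  have h := hA.union hB
  rw [Metric.isBounded_iff] at h
  obtain ⟨C, hC⟩ := h
  exact ⟨C, fun r ⟨a, ha, b, hb, hr⟩ => hr ▸ hC (Set.mem_union_left _ ha) (Set.mem_union_right _ hb)⟩

lemma dist_le_setDelta {A B : Set X} (hA : IsBounded A) (hB : IsBounded B)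
    {a b : X} (ha : a ∈ A) (hb : b ∈ B) : dist a b ≤ setDelta A B :=
  le_csSup (distSet_bddAbove hA hB) ⟨a, ha, b, hb, rfl⟩

lemma setDelta_le {A B : Set X} (hA : A.Nonempty) (hB : B.Nonempty) {c : ℝ}
    (h : ∀ a ∈ A, ∀ b ∈ B, dist a b ≤ c) : setDelta A B ≤ c := by
  apply csSup_le
  · obtain ⟨a, ha⟩ := hA; obtain ⟨b, hb⟩ := hB; exact ⟨dist a b, a, ha, b, hb, rfl⟩
  · rintro r ⟨a, ha, b, hb, rfl⟩; exact h a ha b hb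

lemma setDelta_nonneg {A B : Set X} (hA : A.Nonempty) (hAb : IsBounded A)
    (hB : B.Nonempty) (hBb : IsBounded B) : 0 ≤ setDelta A B := by
  obtain ⟨a, ha⟩ := hA; obtain ⟨b, hb⟩ := hB
  exact le_trans dist_nonneg (dist_le_setDelta hAb hBb ha hb)

lemma setDelta_comm (A B : Set X) : setDelta A B = setDelta B A := by
  unfold setDelta
  congr 1
  ext r
  constructor
  · rintro ⟨a, ha, b, hb, rfl⟩; exact ⟨b, hb, a, ha, dist_comm a b⟩
  · rintro ⟨b, hb, a, ha, rfl⟩; exact ⟨a, ha, b, hb, dist_comm b a⟩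

lemma setDelta_singleton_le {x : X} {A B : Set X} (hx : x ∈ B) (hA : A.Nonempty)
    (hAb : IsBounded A) (hBb : IsBounded B) : setDelta {x} A ≤ setDelta B A := by
  apply setDelta_le (Set.singleton_nonempty x) hA
  rintro a (rfl : a = x) b hb
  exact dist_le_setDelta hBb hAb hx hb

lemma setInfDist_le_dist {A B : Set X} {a b : X} (ha : a ∈ A) (hb : b ∈ B) :
    setInfDist A B ≤ dist a b := by
  refine csInf_le ⟨0, ?_⟩ ⟨a, ha, b, hb, rfl⟩
  rintro r ⟨a', _, b', _, rfl⟩; exact dist_nonneg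

lemma setInfDist_nonneg (A B : Set X) : 0 ≤ setInfDist A B := by
  apply Real.sInf_nonneg
  rintro r ⟨a, _, b, _, rfl⟩; exact dist_nonneg

lemma setDelta_le_three {x y : X} {A B : Set X} (hA : A.Nonempty) (hAb : IsBounded A)
    (hB : B.Nonempty) (hBb : IsBounded B) :
    setDelta A B ≤ setDelta {x} A + dist x y + setDelta {y} B := by
  apply setDelta_le hA hB
  intro a ha b hb
  calc dist a b ≤ dist a x + dist x y + dist y b := dist_triangle4 a x y b
    _ ≤ setDelta {x} A + dist x y + setDelta {y} B := by
        gcongr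
        · exact dist_comm a x ▸ dist_le_setDelta (Bornology.isBounded_singleton) hAb rfl ha
        · exact dist_le_setDelta (Bornology.isBounded_singleton) hBb rfl hb

lemma genM_nonneg (S T : X → Set X) (x y : X) : 0 ≤ genM S T x y :=
  le_trans dist_nonneg (le_trans (le_max_left _ _) (le_max_left _ _))

lemma dist_le_genM (S T : X → Set X) (x y : X) : dist x y ≤ genM S T x y :=
  le_trans (le_max_left _ _) (le_max_left _ _)

lemma deltaS_le_genM (S T : X → Set X) (x y : X) : setDelta {x} (S x) ≤ genM S T x y :=
  le_trans (le_max_right _ _) (le_max_left _ _)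

lemma deltaT_le_genM (S T : X → Set X) (x y : X) : setDelta {y} (T y) ≤ genM S T x y :=
  le_trans (le_max_left _ _) (le_max_right _ _)

lemma setDelta_le_three_genM (S T : X → Set X) (x y : X)
    (hS : (S x).Nonempty ∧ IsBounded (S x)) (hT : (T y).Nonempty ∧ IsBounded (T y)) :
    setDelta (S x) (T y) ≤ 3 * genM S T x y := by
  have h := setDelta_le_three (x := x) (y := y) hS.1 hS.2 hT.1 hT.2
  have h1 := deltaS_le_genM S T x y
  have h2 := deltaT_le_genM S T x y
  have h3 := dist_le_genM S T x y
  linarith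

lemma genM_le {S T : X → Set X} {x y : X} {c : ℝ} (h1 : dist x y ≤ c)
    (h2 : setDelta {x} (S x) ≤ c) (h3 : setDelta {y} (T y) ≤ c)
    (h4 : (setInfDist {x} (T y) + setInfDist {y} (S x)) / 2 ≤ c) : genM S T x y ≤ c := by
  simp only [genM, max_le_iff]; exact ⟨⟨h1, h2⟩, ⟨h3, h4⟩⟩

lemma contraction_step {X : Type*} [MetricSpace X] [PartialOrder X] (S T : X → Set X)
    (hS : ∀ x, (S x).Nonempty ∧ IsBounded (S x))
    (hT : ∀ x, (T x).Nonempty ∧ IsBounded (T x))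
    (ψ φ : ℝ → ℝ) (hψ : PsiClass ψ) (hφ : PropP φ)
    (hcontr : ∀ x y : X, (x ≤ y ∨ y ≤ x) →
      ψ (setDelta (S x) (T y)) ≤ ψ (genM S T x y) - φ (genM S T x y))
    (u v : X) (hcomp : u ≤ v ∨ v ≤ u) (p : ℝ) (hp : 0 ≤ p)
    (hM : genM S T u v ≤ max p (setDelta (S u) (T v))) :
    setDelta (S u) (T v) ≤ p := by
  by_contra hq
  push_neg at hq
  have hMq : genM S T u v ≤ setDelta (S u) (T v) := by
    rwa [max_eq_right hq.le] at hM
  have hM0 : 0 ≤ genM S T u v := genM_nonneg S T u v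
  have h1 := hcontr u v hcomp
  have h2 : ψ (genM S T u v) ≤ ψ (setDelta (S u) (T v)) := hψ.2.1 _ _ hM0 hMq
  have hφeq : φ (genM S T u v) = 0 := le_antisymm (by linarith) (hφ.1 _ hM0)
  have ht : Tendsto (fun _ : ℕ => genM S T u v) atTop (nhds 0) := by
    apply hφ.2 (fun _ => genM S T u v) (fun _ => hM0)
    simp only [hφeq]
    exact tendsto_const_nhds
  have hMeq : genM S T u v = 0 := (tendsto_nhds_unique ht tendsto_const_nhds).symm
  have h3 := setDelta_le_three_genM S T u v (hS u) (hT v)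
  rw [hMeq] at h3
  linarith

end Aux

/-- Along the alternating orbit of a generalized (ψ,φ)-weak contraction pair,
δ(A_n, A_{n+1}) → 0 and hence d(x_n, x_{n+1}) → 0. -/
theorem delta_sequence_tendsto_zero {X : Type*} [MetricSpace X] [PartialOrder X]
    (S T : X → Set X)
    (hS : ∀ x, (S x).Nonempty ∧ IsBounded (S x))
    (hT : ∀ x, (T x).Nonempty ∧ IsBounded (T x))
    (ψ φ : ℝ → ℝ) (hψ : PsiClass ψ) (hφ : PropP φ)
    (hcontr : ∀ x y : X, (x ≤ y ∨ y ≤ x) →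
      ψ (setDelta (S x) (T y)) ≤ ψ (genM S T x y) - φ (genM S T x y))
    (x : ℕ → X) (A : ℕ → Set X)
    (hAeven : ∀ n, A (2 * n) = S (x (2 * n)))
    (hAodd : ∀ n, A (2 * n + 1) = T (x (2 * n + 1)))
    (hxS : ∀ n, x (2 * n + 1) ∈ S (x (2 * n)))
    (hxT : ∀ n, x (2 * n + 2) ∈ T (x (2 * n + 1)))
    (hdec : ∀ n, x (n + 1) ≤ x n) :
    Filter.Tendsto (fun n => setDelta (A n) (A (n + 1))) Filter.atTop (nhds 0) ∧
    Filter.Tendsto (fun n => dist (x n) (x (n + 1))) Filter.atTop (nhds 0) := by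
  -- A n is nonempty and bounded
  have hAfacts : ∀ n, (A n).Nonempty ∧ IsBounded (A n) := by
    intro n
    obtain ⟨k, hk | hk⟩ := Nat.even_or_odd' n
    · rw [hk, hAeven k]; exact hS _
    · rw [hk, hAodd k]; exact hT _
  -- x (n+1) ∈ A n
  have hmem : ∀ n, x (n + 1) ∈ A n := by
    intro n
    obtain ⟨k, hk | hk⟩ := Nat.even_or_odd' n
    · rw [hk, hAeven k]; exact hxS k
    · rw [hk, hAodd k]; exact hxT k
  set d : ℕ → ℝ := fun n => setDelta (A n) (A (n + 1)) with hddef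
  have hd0 : ∀ n, 0 ≤ d n := fun n =>
    setDelta_nonneg (hAfacts n).1 (hAfacts n).2 (hAfacts (n + 1)).1 (hAfacts (n + 1)).2
  -- key construction: for each n there is a comparable pair realizing d (n+1)
  have key : ∀ n : ℕ, ∃ u v : X, (u ≤ v ∨ v ≤ u) ∧ setDelta (S u) (T v) = d (n + 1) ∧
      genM S T u v ≤ max (d n) (d (n + 1)) := by
    intro n
    obtain ⟨k, hk | hk⟩ := Nat.even_or_odd' n
    · -- n = 2k even, n+1 = 2k+1 odd: pair (x (2k+2), x (2k+1))
      subst hk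
      refine ⟨x (2 * k + 2), x (2 * k + 1), Or.inl (hdec (2 * k + 1)), ?_, ?_⟩
      · -- setDelta (S (x (2k+2))) (T (x (2k+1))) = d (2k+1)
        have e1 : A (2 * k + 1) = T (x (2 * k + 1)) := hAodd k
        have e2 : A (2 * k + 2) = S (x (2 * k + 2)) := by
          have := hAeven (k + 1); rwa [show 2 * (k + 1) = 2 * k + 2 by ring] at this
        show _ = setDelta (A (2 * k + 1)) (A (2 * k + 1 + 1))
        rw [show 2 * k + 1 + 1 = 2 * k + 2 by ring, e1, e2, setDelta_comm]
      · -- genM bound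
        have e1 : A (2 * k + 1) = T (x (2 * k + 1)) := hAodd k
        have e2 : A (2 * k + 2) = S (x (2 * k + 2)) := by
          have := hAeven (k + 1); rwa [show 2 * (k + 1) = 2 * k + 2 by ring] at this
        have hdn : d (2 * k) = setDelta (A (2 * k)) (A (2 * k + 1)) := rfl
        have hdn1 : d (2 * k + 1) = setDelta (A (2 * k + 1)) (A (2 * k + 2)) := rfl
        have hv : x (2 * k + 1) ∈ A (2 * k) := hmem (2 * k)
        have hu : x (2 * k + 2) ∈ A (2 * k + 1) := hmem (2 * k + 1)
        have hw : x (2 * k + 3) ∈ A (2 * k + 2) := hmem (2 * k + 2)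
        have b0 := (hAfacts (2 * k)).2
        have b1 := (hAfacts (2 * k + 1)).2
        have b2 := (hAfacts (2 * k + 2)).2
        have hduv : dist (x (2 * k + 2)) (x (2 * k + 1)) ≤ d (2 * k) := by
          rw [hdn, dist_comm]; exact dist_le_setDelta b0 b1 hv hu
        have hδu : setDelta {x (2 * k + 2)} (S (x (2 * k + 2))) ≤ d (2 * k + 1) := by
          rw [hdn1, ← e2]; exact setDelta_singleton_le hu (hAfacts (2 * k + 2)).1 b2 b1
        have hδv : setDelta {x (2 * k + 1)} (T (x (2 * k + 1))) ≤ d (2 * k) := by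
          rw [hdn, ← e1]; exact setDelta_singleton_le hv (hAfacts (2 * k + 1)).1 b1 b0
        have hI1 : setInfDist {x (2 * k + 2)} (T (x (2 * k + 1))) ≤ 0 := by
          have := setInfDist_le_dist (A := {x (2 * k + 2)}) (B := T (x (2 * k + 1)))
            rfl (e1 ▸ hu)
          simpa using this
        have hI2 : setInfDist {x (2 * k + 1)} (S (x (2 * k + 2))) ≤ d (2 * k) + d (2 * k + 1) := by
          have h1 : setInfDist {x (2 * k + 1)} (S (x (2 * k + 2))) ≤
              dist (x (2 * k + 1)) (x (2 * k + 3)) :=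
            setInfDist_le_dist rfl (e2 ▸ hw)
          have h2 : dist (x (2 * k + 2)) (x (2 * k + 3)) ≤ d (2 * k + 1) := by
            rw [hdn1]; exact dist_le_setDelta b1 b2 hu hw
          calc setInfDist {x (2 * k + 1)} (S (x (2 * k + 2))) ≤
              dist (x (2 * k + 1)) (x (2 * k + 3)) := h1
            _ ≤ dist (x (2 * k + 1)) (x (2 * k + 2)) + dist (x (2 * k + 2)) (x (2 * k + 3)) :=
              dist_triangle _ _ _
            _ ≤ d (2 * k) + d (2 * k + 1) := by rw [dist_comm]; linarith
        apply genM_le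
        · exact hduv.trans (le_max_left _ _)
        · exact hδu.trans (le_max_right _ _)
        · exact hδv.trans (le_max_left _ _)
        · have h1 : d (2 * k) ≤ max (d (2 * k)) (d (2 * k + 1)) := le_max_left _ _
          have h2 : d (2 * k + 1) ≤ max (d (2 * k)) (d (2 * k + 1)) := le_max_right _ _
          linarith
    · -- n = 2k+1 odd, n+1 = 2k+2 even: pair (x (2k+2), x (2k+3))
      subst hk
      refine ⟨x (2 * k + 2), x (2 * k + 3), Or.inr (hdec (2 * k + 2)), ?_, ?_⟩
      all_goals {
        have e1 : A (2 * k + 1) = T (x (2 * k + 1)) := hAodd k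
        have e2 : A (2 * k + 2) = S (x (2 * k + 2)) := by
          have := hAeven (k + 1); rwa [show 2 * (k + 1) = 2 * k + 2 by ring] at this
        have e3 : A (2 * k + 3) = T (x (2 * k + 3)) := by
          have := hAodd (k + 1); rwa [show 2 * (k + 1) + 1 = 2 * k + 3 by ring] at this
        have hdn : d (2 * k + 1) = setDelta (A (2 * k + 1)) (A (2 * k + 2)) := rfl
        have hdn1 : d (2 * k + 2) = setDelta (A (2 * k + 2)) (A (2 * k + 3)) := rfl
        have hu : x (2 * k + 2) ∈ A (2 * k + 1) := hmem (2 * k + 1)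
        have hv : x (2 * k + 3) ∈ A (2 * k + 2) := hmem (2 * k + 2)
        have hw : x (2 * k + 4) ∈ A (2 * k + 3) := hmem (2 * k + 3)
        have b1 := (hAfacts (2 * k + 1)).2
        have b2 := (hAfacts (2 * k + 2)).2
        have b3 := (hAfacts (2 * k + 3)).2
        first
        | (show _ = setDelta (A (2 * k + 1 + 1)) (A (2 * k + 1 + 1 + 1))
           rw [show 2 * k + 1 + 1 = 2 * k + 2 by ring, show 2 * k + 2 + 1 = 2 * k + 3 by ring,
             e2, e3])
        | (show genM S T _ _ ≤ max (d (2 * k + 1)) (d (2 * k + 1 + 1))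
           rw [show 2 * k + 1 + 1 = 2 * k + 2 by ring]
           have hduv : dist (x (2 * k + 2)) (x (2 * k + 3)) ≤ d (2 * k + 1) := by
             rw [hdn]; exact dist_le_setDelta b1 b2 hu hv
           have hδu : setDelta {x (2 * k + 2)} (S (x (2 * k + 2))) ≤ d (2 * k + 1) := by
             rw [hdn, ← e2]; exact setDelta_singleton_le hu (hAfacts (2 * k + 2)).1 b2 b1
           have hδv : setDelta {x (2 * k + 3)} (T (x (2 * k + 3))) ≤ d (2 * k + 2) := by
             rw [hdn1, ← e3]; exact setDelta_singleton_le hv (hAfacts (2 * k + 3)).1 b3 b2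
           have hI2 : setInfDist {x (2 * k + 3)} (S (x (2 * k + 2))) ≤ 0 := by
             have := setInfDist_le_dist (A := {x (2 * k + 3)}) (B := S (x (2 * k + 2)))
               rfl (e2 ▸ hv)
             simpa using this
           have hI1 : setInfDist {x (2 * k + 2)} (T (x (2 * k + 3))) ≤
               d (2 * k + 1) + d (2 * k + 2) := by
             have h1 : setInfDist {x (2 * k + 2)} (T (x (2 * k + 3))) ≤
                 dist (x (2 * k + 2)) (x (2 * k + 4)) :=
               setInfDist_le_dist rfl (e3 ▸ hw)
             have h2 : dist (x (2 * k + 3)) (x (2 * k + 4)) ≤ d (2 * k + 2) := by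
               rw [hdn1]; exact dist_le_setDelta b2 b3 hv hw
             calc setInfDist {x (2 * k + 2)} (T (x (2 * k + 3))) ≤
                 dist (x (2 * k + 2)) (x (2 * k + 4)) := h1
               _ ≤ dist (x (2 * k + 2)) (x (2 * k + 3)) + dist (x (2 * k + 3)) (x (2 * k + 4)) :=
                 dist_triangle _ _ _
               _ ≤ d (2 * k + 1) + d (2 * k + 2) := by linarith
           apply genM_le
           · exact hduv.trans (le_max_left _ _)
           · exact hδu.trans (le_max_left _ _)
           · exact hδv.trans (le_max_right _ _)
           · have h1 : d (2 * k + 1) ≤ max (d (2 * k + 1)) (d (2 * k + 2)) := le_max_left _ _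
             have h2 : d (2 * k + 2) ≤ max (d (2 * k + 1)) (d (2 * k + 2)) := le_max_right _ _
             linarith)
      }
  choose u v hcomp hEq hMle using key
  have hmono : ∀ n, d (n + 1) ≤ d n := by
    intro n
    have h := contraction_step S T hS hT ψ φ hψ hφ hcontr (u n) (v n) (hcomp n) (d n) (hd0 n)
      (by rw [hEq n]; exact hMle n)
    rwa [hEq n] at h
  have hψd : ∀ n, ψ (d (n + 1)) ≤ ψ (d n) := fun n => hψ.2.1 _ _ (hd0 (n + 1)) (hmono n)
  have hψanti : Antitone (fun n => ψ (d n)) := antitone_nat_of_succ_le hψd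
  have hψbdd : BddBelow (Set.range fun n => ψ (d n)) := by
    refine ⟨0, ?_⟩; rintro r ⟨n, rfl⟩; exact hψ.1 _ (hd0 n)
  have hψlim : Tendsto (fun n => ψ (d n)) atTop (nhds (⨅ n, ψ (d n))) :=
    tendsto_atTop_ciInf hψanti hψbdd
  have hψlim' : Tendsto (fun n => ψ (d (n + 1))) atTop (nhds (⨅ n, ψ (d n))) :=
    hψlim.comp (tendsto_add_atTop_nat 1)
  have hdiff : Tendsto (fun n => ψ (d n) - ψ (d (n + 1))) atTop (nhds 0) := by
    simpa using hψlim.sub hψlim'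
  have hφle : ∀ n, φ (genM S T (u n) (v n)) ≤ ψ (d n) - ψ (d (n + 1)) := by
    intro n
    have h1 := hcontr (u n) (v n) (hcomp n)
    rw [hEq n] at h1
    have h2 : genM S T (u n) (v n) ≤ d n := by
      have := hMle n; rwa [max_eq_left (hmono n)] at this
    have h3 : ψ (genM S T (u n) (v n)) ≤ ψ (d n) := hψ.2.1 _ _ (genM_nonneg _ _ _ _) h2
    linarith
  have hφnn : ∀ n, 0 ≤ φ (genM S T (u n) (v n)) := fun n => hφ.1 _ (genM_nonneg _ _ _ _)
  have hφtend : Tendsto (fun n => φ (genM S T (u n) (v n))) atTop (nhds 0) :=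
    squeeze_zero hφnn hφle hdiff
  have hNtend : Tendsto (fun n => genM S T (u n) (v n)) atTop (nhds 0) :=
    hφ.2 _ (fun n => genM_nonneg _ _ _ _) hφtend
  have hdle : ∀ n, d (n + 1) ≤ 3 * genM S T (u n) (v n) := by
    intro n
    rw [← hEq n]
    exact setDelta_le_three_genM S T (u n) (v n) (hS _) (hT _)
  have hdshift : Tendsto (fun n => d (n + 1)) atTop (nhds 0) := by
    apply squeeze_zero (fun n => hd0 (n + 1)) hdle
    simpa using hNtend.const_mul 3
  have hdtend : Tendsto d atTop (nhds 0) := (tendsto_add_atTop_iff_nat 1).mp hdshift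
  refine ⟨hdtend, ?_⟩
  have hx : ∀ n, dist (x (n + 1)) (x (n + 1 + 1)) ≤ d n := fun n =>
    dist_le_setDelta (hAfacts n).2 (hAfacts (n + 1)).2 (hmem n) (hmem (n + 1))
  have hshift : Tendsto (fun n => dist (x (n + 1)) (x (n + 1 + 1))) atTop (nhds 0) :=
    squeeze_zero (fun n => dist_nonneg) hx hdtend
  exact (tendsto_add_atTop_iff_nat 1).mp hshift
end

section
/- Let (X,d) be a metric space with partial order ≼ and let S,T : X → B(X) satisfy the generalized (ψ,φ)-weak contractive condition, where ψ ∈ Υ and φ : [0,∞) → [0,∞) has property (P). If u,v ∈ X are comparable points with Su = Tu = {u} and Sv = Tv = {v}, then u = v. -/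
open Filter Topology Bornology

lemma setDelta_singleton {X : Type*} [MetricSpace X] (x y : X) :
    setDelta ({x} : Set X) {y} = dist x y := by
  have : {r : ℝ | ∃ a ∈ ({x} : Set X), ∃ b ∈ ({y} : Set X), r = dist a b} = {dist x y} := by
    ext r; simp [eq_comm]
  rw [setDelta, this, csSup_singleton]

lemma setInfDist_singleton {X : Type*} [MetricSpace X] (x y : X) :
    setInfDist ({x} : Set X) {y} = dist x y := by
  have : {r : ℝ | ∃ a ∈ ({x} : Set X), ∃ b ∈ ({y} : Set X), r = dist a b} = {dist x y} := by
    ext r; simp [eq_comm]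
  rw [setInfDist, this, csInf_singleton]

/-- Comparable common end points of a generalized (ψ,φ)-weak contraction pair coincide. -/
theorem comparable_end_points_eq {X : Type*} [MetricSpace X] [PartialOrder X]
    (S T : X → Set X)
    (hS : ∀ x, (S x).Nonempty ∧ IsBounded (S x))
    (hT : ∀ x, (T x).Nonempty ∧ IsBounded (T x))
    (ψ φ : ℝ → ℝ) (hψ : PsiClass ψ) (hφ : PropP φ)
    (hcontr : ∀ x y : X, (x ≤ y ∨ y ≤ x) →
      ψ (setDelta (S x) (T y)) ≤ ψ (genM S T x y) - φ (genM S T x y))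
    (u v : X) (huv : u ≤ v ∨ v ≤ u)
    (hu : S u = {u} ∧ T u = {u}) (hv : S v = {v} ∧ T v = {v}) :
    u = v := by
  have hd := dist_nonneg (x := u) (y := v)
  have hM : genM S T u v = dist u v := by
    rw [genM, hu.1, hv.2]
    simp only [setDelta_singleton, setInfDist_singleton, dist_self, dist_comm v u]
    have : (dist u v + dist u v) / 2 = dist u v := by ring
    rw [this]
    simp [hd]
  have hc := hcontr u v huv
  rw [hu.1, hv.2, setDelta_singleton, hM] at hc
  have h0 : φ (dist u v) = 0 := le_antisymm (by linarith) (hφ.1 _ hd)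
  have := hφ.2 (fun _ => dist u v) (fun _ => hd) (by simpa [h0] using
    (tendsto_const_nhds : Tendsto (fun _ : ℕ => φ (dist u v)) atTop (nhds (φ (dist u v)))))
  have : dist u v = 0 := (tendsto_nhds_unique this tendsto_const_nhds).symm
  exact dist_eq_zero.mp this
end

section
/- Let (X,d) be a metric space with partial order ≼ and let S,T : X → B(X) satisfy the generalized (ψ,φ)-weak contractive condition, where ψ ∈ Υ and φ : [0,∞) → [0,∞) has property (P). Let u ∈ X be such that Su = {u}. Then Tu = {u}; that is, every end point of S is also an end point of T (and symmetrically, if Tu = {u} then Su = {u}). -/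
open Filter Topology Bornology

section Helpers
variable {X : Type*} [MetricSpace X]

lemma setDelta_singleton_singleton (x : X) : setDelta {x} {x} = 0 := by
  have : {r : ℝ | ∃ a ∈ ({x} : Set X), ∃ b ∈ ({x} : Set X), r = dist a b} = {0} := by
    ext r; simp [dist_self]
  simp [setDelta, this]

lemma setInfDist_singleton_singleton (x : X) : setInfDist {x} {x} = 0 := by
  have : {r : ℝ | ∃ a ∈ ({x} : Set X), ∃ b ∈ ({x} : Set X), r = dist a b} = {0} := by
    ext r; simp [dist_self]
  simp [setInfDist, this]

lemma setDelta_comm_singleton (x : X) (A : Set X) : setDelta A {x} = setDelta {x} A := by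
  unfold setDelta
  congr 1
  ext r
  constructor
  · rintro ⟨a, ha, b, hb, rfl⟩
    exact ⟨b, hb, a, ha, dist_comm a b ▸ rfl⟩
  · rintro ⟨a, ha, b, hb, rfl⟩
    exact ⟨b, hb, a, ha, dist_comm a b ▸ rfl⟩

lemma dist_le_setDelta_singleton (x : X) {A : Set X} (hA : IsBounded A)
    {b : X} (hb : b ∈ A) : dist x b ≤ setDelta {x} A := by
  obtain ⟨C, hC⟩ := Metric.isBounded_iff.mp hA
  apply le_csSup
  · refine ⟨dist x b + C, ?_⟩
    rintro r ⟨a, ha, c, hc, rfl⟩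
    rcases ha with rfl
    calc dist a c ≤ dist a b + dist b c := dist_triangle _ _ _
      _ ≤ dist a b + C := by have := hC hb hc; linarith
  · exact ⟨x, rfl, b, hb, rfl⟩

lemma setDelta_singleton_nonneg (x : X) {A : Set X} (hA : A.Nonempty) (hb : IsBounded A) :
    0 ≤ setDelta {x} A := by
  obtain ⟨b, hbA⟩ := hA
  exact le_trans dist_nonneg (dist_le_setDelta_singleton x hb hbA)

lemma setInfDist_le_setDelta_singleton (x : X) {A : Set X} (hA : A.Nonempty)
    (hb : IsBounded A) : setInfDist {x} A ≤ setDelta {x} A := by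
  obtain ⟨b, hbA⟩ := hA
  refine le_trans (csInf_le ⟨0, ?_⟩ ⟨x, rfl, b, hbA, rfl⟩) (dist_le_setDelta_singleton x hb hbA)
  rintro r ⟨a, ha, c, hc, rfl⟩
  exact dist_nonneg

end Helpers

lemma propP_zero {φ : ℝ → ℝ} (hφ : PropP φ) {d : ℝ} (hd : 0 ≤ d) (h : φ d ≤ 0) : d = 0 := by
  have hz : φ d = 0 := le_antisymm h (hφ.1 d hd)
  have h2 : Filter.Tendsto (fun _ : ℕ => d) Filter.atTop (nhds 0) := by
    apply hφ.2 (fun _ => d) (fun _ => hd)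
    simpa [hz] using (tendsto_const_nhds : Filter.Tendsto (fun _ : ℕ => φ d) _ _)
  exact tendsto_nhds_unique tendsto_const_nhds h2

/-- For a generalized (ψ,φ)-weak contraction pair, every end point of S is an end point
of T, and symmetrically every end point of T is an end point of S. -/
theorem end_point_transfer {X : Type*} [MetricSpace X] [PartialOrder X]
    (S T : X → Set X)
    (hS : ∀ x, (S x).Nonempty ∧ IsBounded (S x))
    (hT : ∀ x, (T x).Nonempty ∧ IsBounded (T x))
    (ψ φ : ℝ → ℝ) (hψ : PsiClass ψ) (hφ : PropP φ)
    (hcontr : ∀ x y : X, (x ≤ y ∨ y ≤ x) →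
      ψ (setDelta (S x) (T y)) ≤ ψ (genM S T x y) - φ (genM S T x y))
    (u : X) :
    (S u = {u} → T u = {u}) ∧ (T u = {u} → S u = {u}) := by
  constructor
  · intro hSu
    set d := setDelta {u} (T u) with hd
    have hdn : 0 ≤ d := setDelta_singleton_nonneg u (hT u).1 (hT u).2
    have hDd : setInfDist {u} (T u) ≤ d := setInfDist_le_setDelta_singleton u (hT u).1 (hT u).2
    have hD0 : 0 ≤ setInfDist {u} (T u) := setInfDist_nonneg _ _
    have hM : genM S T u u = d := by
      unfold genM
      rw [hSu, dist_self, setDelta_singleton_singleton, setInfDist_singleton_singleton,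
        add_zero, max_self]
      rw [max_eq_left (by linarith : setInfDist {u} (T u) / 2 ≤ d),
        max_eq_right hdn]
    have hc := hcontr u u (Or.inl le_rfl)
    rw [hSu, hM, ← hd] at hc
    have hd0 : d = 0 := propP_zero hφ hdn (by linarith)
    rw [Set.eq_singleton_iff_nonempty_unique_mem]
    refine ⟨(hT u).1, fun b hb => ?_⟩
    have := dist_le_setDelta_singleton u (hT u).2 hb
    rw [← hd, hd0] at this
    exact (dist_le_zero.mp this).symm
  · intro hTu
    set d := setDelta {u} (S u) with hd
    have hdn : 0 ≤ d := setDelta_singleton_nonneg u (hS u).1 (hS u).2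
    have hDd : setInfDist {u} (S u) ≤ d := setInfDist_le_setDelta_singleton u (hS u).1 (hS u).2
    have hD0 : 0 ≤ setInfDist {u} (S u) := setInfDist_nonneg _ _
    have hM : genM S T u u = d := by
      unfold genM
      rw [hTu, dist_self, setDelta_singleton_singleton, setInfDist_singleton_singleton,
        zero_add, ← hd]
      rw [max_eq_right hdn, max_eq_right (by linarith : (0:ℝ) ≤ setInfDist {u} (S u) / 2),
        max_eq_left (by linarith : setInfDist {u} (S u) / 2 ≤ d)]
    have hc := hcontr u u (Or.inl le_rfl)
    rw [hTu, setDelta_comm_singleton, hM, ← hd] at hc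
    have hd0 : d = 0 := propP_zero hφ hdn (by linarith)
    rw [Set.eq_singleton_iff_nonempty_unique_mem]
    refine ⟨(hS u).1, fun b hb => ?_⟩
    have := dist_le_setDelta_singleton u (hS u).2 hb
    rw [← hd, hd0] at this
    exact (dist_le_zero.mp this).symm
end
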